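/- Suppose h_1 : W → ℝ and g_1 ∈ ℝ satisfy the single-reel Bellman equation. Then for any θ ∈ ℝ, the augmented-model bias under the random policy admits the fully decomposed form ĥ_N(w_1,...,w_N,x) = (1/N)·Σ_{n=1}^N ( c(w_n,x) + h_1(e(w_n,x)) + (N-1)·h_1(w_n) ) + θ, i.e., this function satisfies the augmented N-reel Bellman equation with gain g_1. -/

import Mathlib

open Finset

/-- Updated reel weight. -/
def reelE (B w x : ℕ) : ℕ := if x ≤ w then w - x else B - x

/-- Filament waste (real-valued). -/
def reelC (w x : ℕ) : ℝ := if x ≤ w then 0 else w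

/-!
Averaging the decomposed bias over the next item `x'` and applying the single-reel Bellman
equation reel by reel gives `∑ₘ h₁(wₘ) + g₁ + θ` in every state. Replacing reel `n` by
`e(wₙ, x)` changes only the `n`-th term of that sum, so the augmented Bellman equation becomes
an identity between finite sums over the reels.
-/

theorem Fintype.sum_comp_update {ι α M : Type*} [Fintype ι] [DecidableEq ι] [AddCommGroup M]
    (f : α → M) (s : ι → α) (n : ι) (v : α) :
    ∑ m, f (Function.update s n v m) = ∑ m, f (s m) - f (s n) + f v := by
  have hupd := Fintype.sum_eq_add_sum_compl n fun m => f (Function.update s n v m)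
  have hs := Fintype.sum_eq_add_sum_compl n fun m => f (s m)
  have hcompl : ∑ m ∈ {n}ᶜ, f (Function.update s n v m) = ∑ m ∈ {n}ᶜ, f (s m) :=
    Finset.sum_congr rfl fun m hm => by rw [Function.update_of_ne (by simpa using hm)]
  rw [Function.update_self] at hupd
  rw [hupd, hs, hcompl]
  abel

theorem Finset.sum_mul_add_const_of_sum_eq_one {ι : Type*} {S : Finset ι} {p : ι → ℝ}
    (hp : ∑ x ∈ S, p x = 1) (f : ι → ℝ) (k : ℝ) :
    ∑ x ∈ S, p x * (f x + k) = ∑ x ∈ S, p x * f x + k := by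
  simp only [mul_add, sum_add_distrib, ← sum_mul, hp, one_mul]

theorem reelE_lt {B w x : ℕ} (hw : w < B) (hx : 0 < x) : reelE B w x < B := by
  unfold reelE
  split <;> omega

noncomputable def decomposedBias (B N : ℕ) (h1 : ℕ → ℝ) (θ : ℝ) (s : Fin N → ℕ) (x : ℕ) : ℝ :=
  (1 / (N : ℝ)) * (∑ n : Fin N, (reelC (s n) x + h1 (reelE B (s n) x) +
    ((N : ℝ) - 1) * h1 (s n))) + θ

section Bellman

variable {B N : ℕ} {p : ℕ → ℝ} {h1 : ℕ → ℝ} {g1 : ℝ}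
  (hp1 : ∑ x ∈ Icc 1 B, p x = 1)
  (hBellman : ∀ w < B, h1 w = -g1 + ∑ x ∈ Icc 1 B, p x * (reelC w x + h1 (reelE B w x)))
include hp1 hBellman

theorem sum_mul_decomposedBias (hN : N ≠ 0) (θ : ℝ) {s : Fin N → ℕ} (hs : ∀ n, s n < B) :
    ∑ x ∈ Icc 1 B, p x * decomposedBias B N h1 θ s x = ∑ n, h1 (s n) + g1 + θ := by
  have hreel : ∀ n, ∑ x ∈ Icc 1 B, p x * (reelC (s n) x + h1 (reelE B (s n) x) +
      ((N : ℝ) - 1) * h1 (s n)) = N * h1 (s n) + g1 := by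
    intro n
    rw [sum_mul_add_const_of_sum_eq_one hp1]
    linarith [hBellman _ (hs n)]
  calc ∑ x ∈ Icc 1 B, p x * decomposedBias B N h1 θ s x
      = (1 / (N : ℝ)) * ∑ n, ∑ x ∈ Icc 1 B, p x * (reelC (s n) x + h1 (reelE B (s n) x) +
          ((N : ℝ) - 1) * h1 (s n)) + θ := by
        unfold decomposedBias
        rw [sum_mul_add_const_of_sum_eq_one hp1]
        congr 1
        simp only [mul_sum]
        rw [sum_comm]
        simp only [mul_left_comm]
    _ = ∑ n, h1 (s n) + g1 + θ := by
        simp only [hreel, sum_add_distrib, ← mul_sum, sum_const, card_univ, Fintype.card_fin,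
          nsmul_eq_mul]
        field_simp

theorem sum_mul_decomposedBias_update (hN : N ≠ 0) (θ : ℝ) {s : Fin N → ℕ}
    (hs : ∀ n, s n < B) {x : ℕ} (hx : x ∈ Icc 1 B) (n : Fin N) :
    ∑ x' ∈ Icc 1 B, p x' * decomposedBias B N h1 θ (Function.update s n (reelE B (s n) x)) x' =
      ∑ m, h1 (s m) - h1 (s n) + h1 (reelE B (s n) x) + g1 + θ := by
  have hs' : ∀ m, Function.update s n (reelE B (s n) x) m < B := by
    intro m
    rcases eq_or_ne m n with rfl | hmn
    · simpa using reelE_lt (hs m) (mem_Icc.1 hx).1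
    · simpa [Function.update_of_ne hmn] using hs m
  rw [sum_mul_decomposedBias hp1 hBellman hN θ hs', Fintype.sum_comp_update]

theorem decomposedBias_bellman (hN : N ≠ 0) (θ : ℝ) {s : Fin N → ℕ} (hs : ∀ n, s n < B)
    {x : ℕ} (hx : x ∈ Icc 1 B) :
    decomposedBias B N h1 θ s x = -g1 + (1 / (N : ℝ)) * ∑ n : Fin N,
      (reelC (s n) x + ∑ x' ∈ Icc 1 B, p x' *
        decomposedBias B N h1 θ (Function.update s n (reelE B (s n) x)) x') := by
  simp only [sum_mul_decomposedBias_update hp1 hBellman hN θ hs hx]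
  unfold decomposedBias
  simp only [sum_add_distrib, sum_sub_distrib, ← mul_sum, sum_const, card_univ, Fintype.card_fin,
    nsmul_eq_mul]
  field_simp
  ring

end Bellman

theorem augmented_N_reel_bias_fully_decomposed_general
    (B N : ℕ) (hN : 0 < N) (p : ℕ → ℝ)
    (hp1 : ∑ x ∈ Icc 1 B, p x = 1)
    (h1 : ℕ → ℝ) (g1 : ℝ)
    (hBellman : ∀ w < B,
      h1 w = -g1 + ∑ x ∈ Icc 1 B, p x * (reelC w x + h1 (reelE B w x)))
    (θ : ℝ) (hhat : (Fin N → ℕ) → ℕ → ℝ)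
    (hhat_def : ∀ s x, hhat s x =
      (1 / (N : ℝ)) * (∑ n : Fin N, (reelC (s n) x + h1 (reelE B (s n) x) +
        ((N : ℝ) - 1) * h1 (s n))) + θ) :
    ∀ s : Fin N → ℕ, (∀ n, s n < B) → ∀ x ∈ Icc 1 B,
      hhat s x =
        -g1 + (1 / (N : ℝ)) * ∑ n : Fin N,
          (reelC (s n) x + ∑ x' ∈ Icc 1 B, p x' *
            hhat (Function.update s n (reelE B (s n) x)) x') := by
  obtain rfl : hhat = decomposedBias B N h1 θ := funext fun s => funext (hhat_def s)
  exact fun s hs x hx => decomposedBias_bellman hp1 hBellman hN.ne' θ hs hx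

/-- Corollary 1: if `(g₁, h₁)` solves the single-reel Bellman
equation, then for any `θ`, the fully decomposed function
`ĥ_N(w,x) := (1/N)·Σ_n (c(w_n,x) + h₁(e(w_n,x)) + (N-1)·h₁(w_n)) + θ`
together with gain `g₁` solves the augmented `N`-reel Bellman equation under
the random policy. -/
theorem augmented_N_reel_bias_fully_decomposed
    (B N : ℕ) (hB : 0 < B) (hN : 0 < N) (p : ℕ → ℝ)
    (hp0 : ∀ x ∈ Icc 1 B, 0 ≤ p x) (hp1 : ∑ x ∈ Icc 1 B, p x = 1)
    (h1 : ℕ → ℝ) (g1 : ℝ)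
    (hBellman : ∀ w < B,
      h1 w = -g1 + ∑ x ∈ Icc 1 B, p x * (reelC w x + h1 (reelE B w x)))
    (θ : ℝ) (hhat : (Fin N → ℕ) → ℕ → ℝ)
    (hhat_def : ∀ s x, hhat s x =
      (1 / (N : ℝ)) * (∑ n : Fin N, (reelC (s n) x + h1 (reelE B (s n) x) +
        ((N : ℝ) - 1) * h1 (s n))) + θ) :
    ∀ s : Fin N → ℕ, (∀ n, s n < B) → ∀ x ∈ Icc 1 B,
      hhat s x =
        -g1 + (1 / (N : ℝ)) * ∑ n : Fin N,
          (reelC (s n) x + ∑ x' ∈ Icc 1 B, p x' *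
            hhat (Function.update s n (reelE B (s n) x)) x') :=
  augmented_N_reel_bias_fully_decomposed_general B N hN p hp1 h1 g1 hBellman θ hhat hhat_def
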